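/- For non-empty I and a ∈ I, a < b < n_I(a), i_1 < q ≤ r, there is an arrow in Γ_{c_I} from A(a,b) = e_b − e_{n_I(a)} to B(q) = e_{i_1} − e_q if and only if b ≤ q, and these are the only arrows of Γ_{c_I}. -/

import Mathlib

noncomputable section

open Finset

/-- `ee r i` is the standard basis vector `e_i` (1-based index) of `ℝ^r`. -/
def ee (r i : ℕ) : Fin r → ℝ := fun j => if (j : ℕ) + 1 = i then 1 else 0

/-- The type-`D_r` simple roots, 1-based: `α_i = e_i - e_{i+1}` for `i ≤ r-1`,
`α_r = e_{r-1} + e_r`. -/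
def sroot (r i : ℕ) : Fin r → ℝ :=
  if i = r then ee r (r - 1) + ee r r else ee r i - ee r (i + 1)

/-- Root-poset order: `ρ ≤ η` iff `η - ρ` is a non-negative integer combination
of the simple roots. -/
def rootLE (r : ℕ) (ρ η : Fin r → ℝ) : Prop :=
  ∃ m : ℕ → ℕ, η - ρ = ∑ i ∈ Finset.Icc 1 r, (m i : ℝ) • sroot r i

/-- The positive roots of type `D_r`: `e_i ± e_j` for `1 ≤ i < j ≤ r`. -/
def Pos (r : ℕ) : Set (Fin r → ℝ) :=
  {v | ∃ i j, 1 ≤ i ∧ i < j ∧ j ≤ r ∧ (v = ee r i - ee r j ∨ v = ee r i + ee r j)}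

/-- The `i`-th (1-based) coordinate of a vector. -/
def coordN (r : ℕ) (x : Fin r → ℝ) (i : ℕ) : ℝ :=
  ∑ j : Fin r, if (j : ℕ) + 1 = i then x j else 0

/-- The successor map on `I ∪ {r}`: least element of `I ∪ {r}` larger than `a`. -/
def nextI (r : ℕ) (I : Finset ℕ) (a : ℕ) : ℕ :=
  WithTop.untopD r (((insert r I).filter (fun x => a < x)).min)

/-- `min (I ∪ {r})`; equals `min I` for nonempty `I ⊆ {1,…,r-1}` and `r` for `I = ∅`. -/
def minI (r : ℕ) (I : Finset ℕ) : ℕ := WithTop.untopD r ((insert r I).min)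

/-- `max I` (0 if empty). -/
def maxI (I : Finset ℕ) : ℕ := WithBot.unbotD 0 (I.max)

/-- The increasing cycle `p_I` on `I ∪ {r}`, fixing all other points. -/
def pI (r : ℕ) (I : Finset ℕ) (a : ℕ) : ℕ :=
  if a ∈ I then nextI r I a else if a = r then minI r I else a

/-- Images of the basis vectors under `c_I`. -/
def cIb (r : ℕ) (I : Finset ℕ) (j : ℕ) : Fin r → ℝ :=
  if j = r then ee r (minI r I) else -(ee r (pI r I j))

/-- The signed permutation `c_I`, extended linearly; for `I = ∅` it is `w_0`. -/
def cI (r : ℕ) (I : Finset ℕ) (x : Fin r → ℝ) : Fin r → ℝ :=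
  ∑ j ∈ Finset.Icc 1 r, coordN r x j • cIb r I j

/-- Images of the basis vectors under `d_I`. -/
def dIb (r : ℕ) (I : Finset ℕ) (j : ℕ) : Fin r → ℝ :=
  if j = maxI I then ee r r
  else if j = r then -(ee r (minI r I))
  else -(ee r (pI r I j))

/-- The signed permutation `d_I`, extended linearly. -/
def dI (r : ℕ) (I : Finset ℕ) (x : Fin r → ℝ) : Fin r → ℝ :=
  ∑ j ∈ Finset.Icc 1 r, coordN r x j • dIb r I j

/-- The longest element `w_0` for `r` odd: `e_i ↦ -e_i` for `i < r`, `e_r ↦ e_r`. -/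
def w0 (r : ℕ) (x : Fin r → ℝ) : Fin r → ℝ :=
  fun j => if (j : ℕ) + 1 = r then x j else -(x j)

/-- The set `A_I`. -/
def AI (r : ℕ) (I : Finset ℕ) : Set (Fin r → ℝ) :=
  {v | ∃ a b, a ∈ I ∧ a < b ∧ b < nextI r I a ∧ v = ee r b - ee r (nextI r I a)}

/-- The set `B_I`. -/
def BI (r : ℕ) (I : Finset ℕ) : Set (Fin r → ℝ) :=
  {v | ∃ q, minI r I < q ∧ q ≤ r ∧ v = ee r (minI r I) - ee r q}

/-- `ν₀(u) = u(Π₊) ∩ Π₊`. -/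
def nu0 (r : ℕ) (u : (Fin r → ℝ) → (Fin r → ℝ)) : Set (Fin r → ℝ) :=
  {β | β ∈ Pos r ∧ ∃ γ ∈ Pos r, u γ = β}

/-- Arrow `α → β` in the rationality graph of `u`: `u⁻¹(α) ≤ β`,
expressed via a positive preimage `γ` of `α`. -/
def Arrow (r : ℕ) (u : (Fin r → ℝ) → (Fin r → ℝ)) (α β : Fin r → ℝ) : Prop :=
  ∃ γ ∈ Pos r, u γ = α ∧ rootLE r γ β

/-- The rationality graph of `u` has a directed cycle. -/
def HasCycle (r : ℕ) (u : (Fin r → ℝ) → (Fin r → ℝ)) : Prop :=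
  ∃ (n : ℕ) (f : ℕ → (Fin r → ℝ)), 0 < n ∧ (∀ i ≤ n, f i ∈ nu0 r u) ∧
    f 0 = f n ∧ ∀ i < n, Arrow r u (f i) (f (i + 1))

/-- The simple reflection `s_a` for `1 ≤ a ≤ r-1`: swaps coordinates `a` and `a+1`. -/
def sw (r a : ℕ) (x : Fin r → ℝ) : Fin r → ℝ := fun j =>
  if (j : ℕ) + 1 = a then coordN r x (a + 1)
  else if (j : ℕ) + 1 = a + 1 then coordN r x a
  else x j

/-- The spin reflection `s_r`: `e_{r-1} ↦ -e_r`, `e_r ↦ -e_{r-1}`. -/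
def sSpin (r : ℕ) (x : Fin r → ℝ) : Fin r → ℝ := fun j =>
  if (j : ℕ) + 1 = r - 1 then -(coordN r x r)
  else if (j : ℕ) + 1 = r then -(coordN r x (r - 1))
  else x j


-- helper: sum of an indicator
lemma sum_ind {r i : ℕ} (h1 : 1 ≤ i) (h2 : i ≤ r) (c : ℝ) :
    (∑ j : Fin r, if (j : ℕ) + 1 = i then c else 0) = c := by
  rw [Finset.sum_eq_single (⟨i - 1, by omega⟩ : Fin r)]
  · simp; omega
  · intro j _ hj
    rw [if_neg]
    intro h
    apply hj
    apply Fin.ext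
    simp
    omega
  · intro h
    exact absurd (Finset.mem_univ _) h

/-- partial coordinate-sum functional: sum of coordinates `≥ b`. -/
def phi (r b : ℕ) (v : Fin r → ℝ) : ℝ := ∑ j : Fin r, if b ≤ (j : ℕ) + 1 then v j else 0

lemma phi_ee {r i : ℕ} (b : ℕ) (h1 : 1 ≤ i) (h2 : i ≤ r) :
    phi r b (ee r i) = if b ≤ i then 1 else 0 := by
  unfold phi ee
  rw [← sum_ind h1 h2 (if b ≤ i then (1:ℝ) else 0)]
  apply Finset.sum_congr rfl
  intro j _
  split_ifs <;> simp_all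

lemma phi_add {r b : ℕ} (v w : Fin r → ℝ) : phi r b (v + w) = phi r b v + phi r b w := by
  unfold phi
  rw [← Finset.sum_add_distrib]
  apply Finset.sum_congr rfl
  intro j _
  split <;> simp

lemma phi_sub {r b : ℕ} (v w : Fin r → ℝ) : phi r b (v - w) = phi r b v - phi r b w := by
  unfold phi
  rw [← Finset.sum_sub_distrib]
  apply Finset.sum_congr rfl
  intro j _
  split <;> simp

lemma phi_smul {r b : ℕ} (c : ℝ) (v : Fin r → ℝ) : phi r b (c • v) = c * phi r b v := by
  unfold phi
  rw [Finset.mul_sum]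
  apply Finset.sum_congr rfl
  intro j _
  split <;> simp

lemma phi_sum {r b : ℕ} {s : Finset ℕ} (f : ℕ → Fin r → ℝ) :
    phi r b (∑ i ∈ s, f i) = ∑ i ∈ s, phi r b (f i) := by
  unfold phi
  rw [Finset.sum_comm]
  apply Finset.sum_congr rfl
  intro j _
  split
  · simp [Finset.sum_apply]
  · simp

lemma phi_sroot {r i : ℕ} (b : ℕ) (h1 : 1 ≤ i) (h2 : i < r) :
    phi r b (sroot r i) = (if b ≤ i then (1:ℝ) else 0) - (if b ≤ i + 1 then 1 else 0) := by
  unfold sroot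
  rw [if_neg (by omega), phi_sub, phi_ee b h1 (by omega), phi_ee b (by omega) (by omega)]

lemma phi_sroot_r {r : ℕ} (b : ℕ) (hr : 2 ≤ r) :
    phi r b (sroot r r) = (if b ≤ r - 1 then (1:ℝ) else 0) + (if b ≤ r then 1 else 0) := by
  unfold sroot
  rw [if_pos rfl, phi_add, phi_ee b (by omega) (by omega), phi_ee b (by omega) le_rfl]

lemma key1 {r : ℕ} (hr : 2 ≤ r) (m : ℕ → ℕ) :
    phi r 0 (∑ i ∈ Finset.Icc 1 r, (m i : ℝ) • sroot r i) = 2 * m r := by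
  rw [phi_sum]
  rw [Finset.sum_eq_single r]
  · rw [phi_smul, phi_sroot_r 0 hr]
    norm_num; ring
  · intro i hi hir
    rw [phi_smul, phi_sroot 0 (Finset.mem_Icc.mp hi).1 (lt_of_le_of_ne (Finset.mem_Icc.mp hi).2 hir)]
    norm_num
  · intro h
    exact absurd (Finset.mem_Icc.mpr ⟨by omega, le_rfl⟩) h

lemma key2 {r : ℕ} (hr : 2 ≤ r) (m : ℕ → ℕ) (b : ℕ) (hb2 : 2 ≤ b) (hbr : b ≤ r)
    (hmr : m r = 0) :
    phi r b (∑ i ∈ Finset.Icc 1 r, (m i : ℝ) • sroot r i) = -(m (b - 1) : ℝ) := by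
  rw [phi_sum]
  rw [Finset.sum_eq_single (b - 1)]
  · rw [phi_smul, phi_sroot b (by omega) (by omega)]
    rw [if_neg (by omega), if_pos (by omega)]
    ring
  · intro i hi hib
    rcases Finset.mem_Icc.mp hi with ⟨hi1, hi2⟩
    by_cases hir : i = r
    · subst hir; rw [phi_smul]; simp [hmr]
    · rw [phi_smul, phi_sroot b hi1 (by omega)]
      have : (if b ≤ i then (1:ℝ) else 0) = (if b ≤ i + 1 then 1 else 0) := by
        split_ifs <;> first | rfl | omega
      rw [this]; ring
  · intro h
    exact absurd (Finset.mem_Icc.mpr ⟨by omega, by omega⟩) h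

lemma rootLE_mr_eq {r : ℕ} (hr : 2 ≤ r) {x y u v : ℕ}
    (hx : 1 ≤ x) (hxr : x ≤ r) (hy : 1 ≤ y) (hyr : y ≤ r)
    (hu : 1 ≤ u) (hur : u ≤ r) (hv : 1 ≤ v) (hvr : v ≤ r)
    (m : ℕ → ℕ)
    (hm : ee r u - ee r v - (ee r x - ee r y) = ∑ i ∈ Finset.Icc 1 r, (m i : ℝ) • sroot r i) :
    m r = 0 := by
  have h0 := congrArg (phi r 0) hm
  rw [key1 hr, phi_sub, phi_sub, phi_sub, phi_ee 0 hu hur, phi_ee 0 hv hvr,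
    phi_ee 0 hx hxr, phi_ee 0 hy hyr] at h0
  norm_num at h0
  exact_mod_cast h0

lemma rootLE_forward {r : ℕ} (hr : 2 ≤ r) {x y u v : ℕ}
    (hx : 1 ≤ x) (hxy : x < y) (hyr : y ≤ r)
    (hu : 1 ≤ u) (huv : u < v) (hvr : v ≤ r)
    (h : rootLE r (ee r x - ee r y) (ee r u - ee r v)) : u ≤ x ∧ y ≤ v := by
  obtain ⟨m, hm⟩ := h
  have hmr : m r = 0 :=
    rootLE_mr_eq hr hx (by omega) (by omega) hyr hu (by omega) (by omega) hvr m hm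
  have coeff : ∀ w, 2 ≤ w → w ≤ r →
      ((if w ≤ u then (1:ℝ) else 0) - (if w ≤ v then 1 else 0) -
        ((if w ≤ x then 1 else 0) - (if w ≤ y then 1 else 0))) = -(m (w-1) : ℝ) := by
    intro w hw2 hwr
    have hw := congrArg (phi r w) hm
    rw [key2 hr m w hw2 hwr hmr, phi_sub, phi_sub, phi_sub, phi_ee w hu (by omega),
      phi_ee w (by omega : 1 ≤ v) hvr, phi_ee w hx (by omega), phi_ee w (by omega : 1 ≤ y) hyr] at hw
    exact hw
  constructor
  · by_contra hxu
    push_neg at hxu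
    have h1 := coeff (x + 1) (by omega) (by omega)
    have h2 : (0:ℝ) ≤ (m (x + 1 - 1) : ℝ) := Nat.cast_nonneg _
    split_ifs at h1 <;> first | omega | linarith
  · by_contra hvy
    push_neg at hvy
    have h1 := coeff (max x v + 1) (by omega) (by omega)
    have h2 : (0:ℝ) ≤ (m (max x v + 1 - 1) : ℝ) := Nat.cast_nonneg _
    split_ifs at h1 <;> first | omega | linarith

lemma rootLE_plus_forward {r : ℕ} (hr : 2 ≤ r) {s u v : ℕ}
    (hs : 1 ≤ s) (hsr : s ≤ r) (hu : 1 ≤ u) (hur : u ≤ r) (hv : 1 ≤ v) (hvr : v ≤ r)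
    (h : rootLE r (ee r s + ee r r) (ee r u - ee r v)) : False := by
  obtain ⟨m, hm⟩ := h
  have h0 := congrArg (phi r 0) hm
  rw [key1 hr, phi_sub, phi_sub, phi_add, phi_ee 0 hu hur, phi_ee 0 hv hvr,
    phi_ee 0 hs hsr, phi_ee 0 (by omega : 1 ≤ r) le_rfl] at h0
  norm_num at h0
  have h2 : (0:ℝ) ≤ (m r : ℝ) := Nat.cast_nonneg _
  linarith

lemma telescope {r : ℕ} {b : ℕ} (hb : 1 ≤ b) :
    ∀ q, b ≤ q → q ≤ r → (∑ i ∈ Finset.Ico b q, sroot r i) = ee r b - ee r q := by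
  intro q
  induction q with
  | zero => intro h1 _; omega
  | succ q ih =>
    intro h1 h2
    rcases eq_or_lt_of_le h1 with he | hlt
    · rw [← he]
      simp
    · have hbq : b ≤ q := by omega
      rw [Finset.sum_Ico_succ_top hbq, ih hbq (by omega)]
      have : sroot r q = ee r q - ee r (q + 1) := by
        unfold sroot; rw [if_neg (by omega)]
      rw [this, sub_add_sub_cancel]

lemma rootLE_construct {r : ℕ} {x y u v : ℕ}
    (hu : 1 ≤ u) (hux : u ≤ x) (hxy : x < y) (hyv : y ≤ v) (hvr : v ≤ r) :
    rootLE r (ee r x - ee r y) (ee r u - ee r v) := by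
  refine ⟨fun i => if i ∈ Finset.Ico u x ∪ Finset.Ico y v then 1 else 0, ?_⟩
  have hsub : Finset.Ico u x ∪ Finset.Ico y v ⊆ Finset.Icc 1 r := by
    intro i hi
    rcases Finset.mem_union.mp hi with h | h <;>
      · rw [Finset.mem_Ico] at h; rw [Finset.mem_Icc]; omega
  have step1 : ∀ i : ℕ, ((if i ∈ Finset.Ico u x ∪ Finset.Ico y v then (1:ℕ) else 0 : ℕ) : ℝ) • sroot r i
      = if i ∈ Finset.Ico u x ∪ Finset.Ico y v then sroot r i else 0 := by
    intro i; split <;> simp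
  rw [Finset.sum_congr rfl (fun i _ => step1 i)]
  rw [Finset.sum_ite_mem]
  rw [Finset.inter_eq_right.mpr hsub]
  rw [Finset.sum_union (by
    rw [Finset.disjoint_left]
    intro i hi1 hi2
    rw [Finset.mem_Ico] at hi1 hi2
    omega)]
  rw [telescope hu x hux (by omega), telescope (by omega : 1 ≤ y) v hyv hvr]
  abel

section Facts
variable {r : ℕ} {I : Finset ℕ}

lemma coordN_ee {i : ℕ} (k : ℕ) (h1 : 1 ≤ i) (h2 : i ≤ r) :
    coordN r (ee r i) k = if k = i then 1 else 0 := by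
  unfold coordN ee
  by_cases hk : k = i
  · subst hk
    rw [if_pos rfl]
    have hstep : ∀ j : Fin r, (if (j:ℕ)+1 = k then (if (j:ℕ)+1 = k then (1:ℝ) else 0) else 0)
        = (if (j:ℕ)+1 = k then (1:ℝ) else 0) := by
      intro j; split_ifs <;> simp_all
    rw [Finset.sum_congr rfl fun j _ => hstep j, sum_ind h1 h2]
  · rw [if_neg hk]
    apply Finset.sum_eq_zero
    intro j _
    split_ifs <;> first | rfl | omega

lemma coordN_sub (x y : Fin r → ℝ) (k : ℕ) :
    coordN r (x - y) k = coordN r x k - coordN r y k := by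
  unfold coordN
  rw [← Finset.sum_sub_distrib]
  apply Finset.sum_congr rfl
  intro j _
  split <;> simp

lemma coordN_add (x y : Fin r → ℝ) (k : ℕ) :
    coordN r (x + y) k = coordN r x k + coordN r y k := by
  unfold coordN
  rw [← Finset.sum_add_distrib]
  apply Finset.sum_congr rfl
  intro j _
  split <;> simp

lemma cI_sub {i j : ℕ} (hi1 : 1 ≤ i) (hir : i ≤ r) (hj1 : 1 ≤ j) (hjr : j ≤ r) :
    cI r I (ee r i - ee r j) = cIb r I i - cIb r I j := by
  unfold cI
  have : ∀ k ∈ Finset.Icc 1 r, coordN r (ee r i - ee r j) k • cIb r I k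
      = (if k = i then cIb r I k else 0) - (if k = j then cIb r I k else 0) := by
    intro k _
    rw [coordN_sub, coordN_ee k hi1 hir, coordN_ee k hj1 hjr]
    simp only [sub_smul, ite_smul, one_smul, zero_smul]
  rw [Finset.sum_congr rfl this, Finset.sum_sub_distrib,
    Finset.sum_ite_eq' _ i (cIb r I), Finset.sum_ite_eq' _ j (cIb r I),
    if_pos (Finset.mem_Icc.mpr ⟨hi1, hir⟩), if_pos (Finset.mem_Icc.mpr ⟨hj1, hjr⟩)]

lemma cI_add {i j : ℕ} (hi1 : 1 ≤ i) (hir : i ≤ r) (hj1 : 1 ≤ j) (hjr : j ≤ r) :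
    cI r I (ee r i + ee r j) = cIb r I i + cIb r I j := by
  unfold cI
  have : ∀ k ∈ Finset.Icc 1 r, coordN r (ee r i + ee r j) k • cIb r I k
      = (if k = i then cIb r I k else 0) + (if k = j then cIb r I k else 0) := by
    intro k _
    rw [coordN_add, coordN_ee k hi1 hir, coordN_ee k hj1 hjr]
    simp only [add_smul, ite_smul, one_smul, zero_smul]
  rw [Finset.sum_congr rfl this, Finset.sum_add_distrib,
    Finset.sum_ite_eq' _ i (cIb r I), Finset.sum_ite_eq' _ j (cIb r I),
    if_pos (Finset.mem_Icc.mpr ⟨hi1, hir⟩), if_pos (Finset.mem_Icc.mpr ⟨hj1, hjr⟩)]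

end Facts

section Nat
variable {r : ℕ} {I : Finset ℕ}

lemma minI_eq (hI : I.Nonempty) (hIs : I ⊆ Finset.Icc 1 (r - 1)) :
    minI r I = I.min' hI := by
  have hm : I.min = (I.min' hI : ℕ) := (Finset.coe_min' hI).symm
  have hle : I.min' hI ≤ r := by
    have := hIs (I.min'_mem hI); rw [Finset.mem_Icc] at this; omega
  unfold minI
  rw [← Finset.coe_min' (I.insert_nonempty r), WithTop.untopD_coe,
    Finset.min'_insert r I hI, min_eq_right hle]

lemma minI_mem (hI : I.Nonempty) (hIs : I ⊆ Finset.Icc 1 (r - 1)) : minI r I ∈ I := by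
  rw [minI_eq hI hIs]; exact I.min'_mem hI

lemma minI_le (hI : I.Nonempty) (hIs : I ⊆ Finset.Icc 1 (r - 1)) {x : ℕ} (hx : x ∈ I) :
    minI r I ≤ x := by
  rw [minI_eq hI hIs]; exact I.min'_le x hx

lemma mem_bounds (hIs : I ⊆ Finset.Icc 1 (r - 1)) {x : ℕ} (hx : x ∈ I) :
    1 ≤ x ∧ x ≤ r - 1 := Finset.mem_Icc.mp (hIs hx)

-- nextI spec
lemma nextI_spec {a : ℕ} (ha : a < r) :
    nextI r I a ∈ insert r I ∧ a < nextI r I a ∧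
      ∀ x ∈ insert r I, a < x → nextI r I a ≤ x := by
  classical
  have hrs : r ∈ (insert r I).filter (fun x => a < x) := by
    rw [Finset.mem_filter]
    exact ⟨Finset.mem_insert_self _ _, ha⟩
  have hne : ((insert r I).filter (fun x => a < x)).Nonempty := ⟨r, hrs⟩
  have hmin : nextI r I a = ((insert r I).filter (fun x => a < x)).min' hne := by
    unfold nextI
    rw [← Finset.coe_min' hne, WithTop.untopD_coe]
  have hmem := ((insert r I).filter (fun x => a < x)).min'_mem hne
  rw [Finset.mem_filter] at hmem
  rw [hmin]
  refine ⟨hmem.1, hmem.2, ?_⟩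
  intro x hx hax
  exact Finset.min'_le _ x (by rw [Finset.mem_filter]; exact ⟨hx, hax⟩)

lemma nextI_mem {a : ℕ} (ha : a < r) : nextI r I a ∈ insert r I := (nextI_spec ha).1
lemma lt_nextI {a : ℕ} (ha : a < r) : a < nextI r I a := (nextI_spec ha).2.1
lemma nextI_le {a x : ℕ} (ha : a < r) (hx : x ∈ insert r I) (hax : a < x) :
    nextI r I a ≤ x := (nextI_spec ha).2.2 x hx hax
lemma nextI_le_r {a : ℕ} (ha : a < r) : nextI r I a ≤ r :=
  nextI_le ha (Finset.mem_insert_self _ _) ha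

lemma nextI_inj (hIs : I ⊆ Finset.Icc 1 (r - 1)) {a b : ℕ} (ha : a ∈ I) (hb : b ∈ I)
    (h : nextI r I a = nextI r I b) : a = b := by
  have har : a < r := by have := mem_bounds hIs ha; omega
  have hbr : b < r := by have := mem_bounds hIs hb; omega
  by_contra hne
  rcases Nat.lt_or_ge a b with hab | hab
  · have h1 : nextI r I a ≤ b := nextI_le har (Finset.mem_insert_of_mem hb) hab
    have h2 : b < nextI r I b := lt_nextI hbr
    omega
  · have hba : b < a := by omega
    have h1 : nextI r I b ≤ a := nextI_le hbr (Finset.mem_insert_of_mem ha) hba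
    have h2 : a < nextI r I a := lt_nextI har
    omega

lemma between_not_mem {a b : ℕ} (ha : a ∈ I) (har : a < r) (hab : a < b)
    (hbn : b < nextI r I a) : b ∉ insert r I := by
  intro hb
  have := nextI_le har hb hab
  omega

-- pI values
lemma pI_mem {a : ℕ} (ha : a ∈ I) : pI r I a = nextI r I a := if_pos ha

lemma pI_r (hIs : I ⊆ Finset.Icc 1 (r - 1)) (hr1 : 1 ≤ r) : pI r I r = minI r I := by
  unfold pI
  rw [if_neg, if_pos rfl]
  intro h
  have := mem_bounds hIs h; omega

lemma pI_fix {a : ℕ} (h1 : a ∉ I) (h2 : a ≠ r) : pI r I a = a := by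
  unfold pI; rw [if_neg h1, if_neg h2]

lemma pI_bounds (hI : I.Nonempty) (hIs : I ⊆ Finset.Icc 1 (r - 1)) {a : ℕ}
    (h1 : 1 ≤ a) (h2 : a ≤ r) : 1 ≤ pI r I a ∧ pI r I a ≤ r := by
  by_cases ha : a ∈ I
  · rw [pI_mem ha]
    have har : a < r := by have := mem_bounds hIs ha; omega
    have := lt_nextI (I := I) har
    have := nextI_le_r (I := I) har
    omega
  · by_cases har : a = r
    · subst har
      rw [pI_r hIs (by omega)]
      have := mem_bounds hIs (minI_mem hI hIs)
      omega
    · rw [pI_fix ha har]; exact ⟨h1, h2⟩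

-- preimage facts for pI
lemma pI_eq_fix (hI : I.Nonempty) (hIs : I ⊆ Finset.Icc 1 (r - 1)) {x c : ℕ}
    (hx1 : 1 ≤ x) (hx2 : x ≤ r) (hc : c ∉ insert r I) (h : pI r I x = c) : x = c := by
  by_cases hxI : x ∈ I
  · rw [pI_mem hxI] at h
    have hxr : x < r := by have := mem_bounds hIs hxI; omega
    exact absurd (h ▸ nextI_mem hxr) hc
  · by_cases hxr : x = r
    · subst hxr
      rw [pI_r hIs (by omega)] at h
      exact absurd (Finset.mem_insert_of_mem (h ▸ minI_mem hI hIs)) hc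
    · rw [pI_fix hxI hxr] at h; exact h

lemma pI_eq_next (hI : I.Nonempty) (hIs : I ⊆ Finset.Icc 1 (r - 1)) {x a : ℕ}
    (ha : a ∈ I) (hx1 : 1 ≤ x) (hx2 : x ≤ r) (h : pI r I x = nextI r I a) : x = a := by
  have har : a < r := by have := mem_bounds hIs ha; omega
  by_cases hxI : x ∈ I
  · rw [pI_mem hxI] at h
    exact nextI_inj hIs hxI ha h
  · by_cases hxr : x = r
    · subst hxr
      rw [pI_r hIs (by omega)] at h
      have h1 := minI_le hI hIs ha
      have h2 := lt_nextI (I := I) har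
      omega
    · rw [pI_fix hxI hxr] at h
      subst h
      exact absurd (nextI_mem har) (by
        intro hmem
        rcases Finset.mem_insert.mp hmem with h' | h'
        · exact hxr h'
        · exact hxI h')

lemma pI_eq_min (hI : I.Nonempty) (hIs : I ⊆ Finset.Icc 1 (r - 1)) {x : ℕ}
    (hx1 : 1 ≤ x) (hx2 : x ≤ r) (h : pI r I x = minI r I) : x = r := by
  by_cases hxI : x ∈ I
  · rw [pI_mem hxI] at h
    have hxr : x < r := by have := mem_bounds hIs hxI; omega
    have h1 := minI_le hI hIs hxI
    have h2 := lt_nextI (I := I) hxr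
    omega
  · by_cases hxr : x = r
    · exact hxr
    · rw [pI_fix hxI hxr] at h
      exact absurd (h ▸ minI_mem hI hIs) hxI

end Nat

section Images
variable {r : ℕ} {I : Finset ℕ}

lemma phi_neg {b : ℕ} (v : Fin r → ℝ) : phi r b (-v) = -phi r b v := by
  unfold phi
  rw [← Finset.sum_neg_distrib]
  apply Finset.sum_congr rfl
  intro j _
  split <;> simp

lemma tot_ee {i : ℕ} (h1 : 1 ≤ i) (h2 : i ≤ r) : phi r 0 (ee r i) = 1 := by
  rw [phi_ee 0 h1 h2, if_pos (by omega)]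

lemma cIb_r' : cIb r I r = ee r (minI r I) := if_pos rfl

lemma cIb_ne {j : ℕ} (h : j ≠ r) : cIb r I j = -(ee r (pI r I j)) := if_neg h

lemma cI_mm {s t : ℕ} (hs : 1 ≤ s) (hst : s < t) (htr : t < r) :
    cI r I (ee r s - ee r t) = ee r (pI r I t) - ee r (pI r I s) := by
  rw [cI_sub hs (by omega) (by omega) (by omega), cIb_ne (show s ≠ r by omega),
    cIb_ne (show t ≠ r by omega)]
  abel

lemma cI_mr {s : ℕ} (hs : 1 ≤ s) (hsr : s < r) :
    cI r I (ee r s - ee r r) = -(ee r (pI r I s)) - ee r (minI r I) := by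
  rw [cI_sub hs (by omega) (by omega) le_rfl, cIb_ne (show s ≠ r by omega), cIb_r']

lemma cI_pm {s t : ℕ} (hs : 1 ≤ s) (hst : s < t) (htr : t < r) :
    cI r I (ee r s + ee r t) = -(ee r (pI r I s)) + -(ee r (pI r I t)) := by
  rw [cI_add hs (by omega) (by omega) (by omega), cIb_ne (show s ≠ r by omega),
    cIb_ne (show t ≠ r by omega)]

lemma cI_pr {s : ℕ} (hs : 1 ≤ s) (hsr : s < r) :
    cI r I (ee r s + ee r r) = ee r (minI r I) - ee r (pI r I s) := by
  rw [cI_add hs (by omega) (by omega) le_rfl, cIb_ne (show s ≠ r by omega), cIb_r']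
  abel

lemma ee_sub_inj {c d x y : ℕ} (hc1 : 1 ≤ c) (hcr : c ≤ r) (hd1 : 1 ≤ d) (hdr : d ≤ r)
    (hx1 : 1 ≤ x) (hxr : x ≤ r) (hy1 : 1 ≤ y) (hyr : y ≤ r) (hxy : x ≠ y)
    (h : ee r c - ee r d = ee r x - ee r y) : c = x ∧ d = y := by
  have h1 := congrArg (fun v => coordN r v x) h
  have h2 := congrArg (fun v => coordN r v y) h
  simp only [coordN_sub] at h1 h2
  rw [coordN_ee x hc1 hcr, coordN_ee x hd1 hdr, coordN_ee x hx1 hxr, coordN_ee x hy1 hyr] at h1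
  rw [coordN_ee y hc1 hcr, coordN_ee y hd1 hdr, coordN_ee y hx1 hxr, coordN_ee y hy1 hyr] at h2
  split_ifs at h1 h2 <;> norm_num at h1 <;> norm_num at h2 <;> omega

end Images

section Main
variable {r : ℕ} {I : Finset ℕ}

/-- total coordinate sum of both sides of `cI γ = ee u - ee v` rules out the
two cases whose image has total sum `-2`. -/
lemma preimage_cases (hI : I.Nonempty) (hIs : I ⊆ Finset.Icc 1 (r - 1)) (hr : 5 ≤ r)
    {γ : Fin r → ℝ} (hγ : γ ∈ Pos r) {u v : ℕ} (hu1 : 1 ≤ u) (hur : u ≤ r)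
    (hv1 : 1 ≤ v) (hvr : v ≤ r) (h : cI r I γ = ee r u - ee r v) :
    (∃ s t, 1 ≤ s ∧ s < t ∧ t < r ∧ γ = ee r s - ee r t ∧
      ee r (pI r I t) - ee r (pI r I s) = ee r u - ee r v) ∨
    (∃ s, 1 ≤ s ∧ s < r ∧ γ = ee r s + ee r r ∧
      ee r (minI r I) - ee r (pI r I s) = ee r u - ee r v) := by
  obtain ⟨s, t, hs1, hst, htr, hcase⟩ := hγ
  have htot : phi r 0 (cI r I γ) = 0 := by
    rw [h, phi_sub, tot_ee hu1 hur, tot_ee hv1 hvr]; ring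
  have hps := pI_bounds hI hIs (show 1 ≤ s by omega) (show s ≤ r by omega)
  rcases hcase with hγe | hγe
  · by_cases ht : t = r
    · exfalso
      subst ht
      rw [hγe, cI_mr hs1 (by omega)] at htot
      have hmb := mem_bounds hIs (minI_mem hI hIs)
      rw [phi_sub, phi_neg, tot_ee hps.1 hps.2, tot_ee (by omega) (by omega)] at htot
      norm_num at htot
    · left
      have htr' : t < r := by omega
      refine ⟨s, t, hs1, hst, htr', hγe, ?_⟩
      rw [hγe, cI_mm hs1 hst htr'] at h
      exact h
  · by_cases ht : t = r
    · right
      subst ht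
      refine ⟨s, hs1, hst, hγe, ?_⟩
      rw [hγe, cI_pr hs1 hst] at h
      exact h
    · exfalso
      have htr' : t < r := by omega
      have hpt := pI_bounds hI hIs (show 1 ≤ t by omega) (show t ≤ r by omega)
      rw [hγe, cI_pm hs1 hst htr'] at htot
      rw [phi_add, phi_neg, phi_neg, tot_ee hps.1 hps.2, tot_ee hpt.1 hpt.2] at htot
      norm_num at htot

lemma preimage_A (hI : I.Nonempty) (hIs : I ⊆ Finset.Icc 1 (r - 1)) (hr : 5 ≤ r)
    {a b : ℕ} (ha : a ∈ I) (hab : a < b) (hbn : b < nextI r I a)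
    {γ : Fin r → ℝ} (hγ : γ ∈ Pos r) (h : cI r I γ = ee r b - ee r (nextI r I a)) :
    γ = ee r a - ee r b := by
  have hba := mem_bounds hIs ha
  have har : a < r := by omega
  have hNr := nextI_le_r (I := I) har
  have haN := lt_nextI (I := I) har
  have hbI : b ∉ insert r I := between_not_mem ha har hab hbn
  rcases preimage_cases hI hIs hr hγ (show 1 ≤ b by omega) (show b ≤ r by omega)
    (show 1 ≤ nextI r I a by omega) hNr h with
    ⟨s, t, hs1, hst, htr, hγe, heq⟩ | ⟨s, hs1, hsr, hγe, heq⟩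
  · have hps := pI_bounds hI hIs (show 1 ≤ s by omega) (show s ≤ r by omega)
    have hpt := pI_bounds hI hIs (show 1 ≤ t by omega) (show t ≤ r by omega)
    have hinj := ee_sub_inj hpt.1 hpt.2 hps.1 hps.2 (show 1 ≤ b by omega)
      (show b ≤ r by omega) (show 1 ≤ nextI r I a by omega) hNr (by omega) heq
    have hts : t = b := pI_eq_fix hI hIs (by omega) (by omega) hbI hinj.1
    have hsa : s = a := pI_eq_next hI hIs ha (by omega) (by omega) hinj.2
    rw [hγe, hts, hsa]
  · exfalso
    have hps := pI_bounds hI hIs (show 1 ≤ s by omega) (show s ≤ r by omega)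
    have hmb := mem_bounds hIs (minI_mem hI hIs)
    have hinj := ee_sub_inj (show 1 ≤ minI r I by omega) (show minI r I ≤ r by omega)
      hps.1 hps.2 (show 1 ≤ b by omega) (show b ≤ r by omega)
      (show 1 ≤ nextI r I a by omega) hNr (by omega) heq
    exact hbI (Finset.mem_insert_of_mem (hinj.1 ▸ minI_mem hI hIs))

lemma preimage_B (hI : I.Nonempty) (hIs : I ⊆ Finset.Icc 1 (r - 1)) (hr : 5 ≤ r)
    {q : ℕ} (hq1 : minI r I < q) (hqr : q ≤ r)
    {γ : Fin r → ℝ} (hγ : γ ∈ Pos r) (h : cI r I γ = ee r (minI r I) - ee r q) :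
    ∃ s, 1 ≤ s ∧ s < r ∧ γ = ee r s + ee r r := by
  have hmb := mem_bounds hIs (minI_mem hI hIs)
  rcases preimage_cases hI hIs hr hγ (show 1 ≤ minI r I by omega) (show minI r I ≤ r by omega)
    (show 1 ≤ q by omega) hqr h with
    ⟨s, t, hs1, hst, htr, hγe, heq⟩ | ⟨s, hs1, hsr, hγe, heq⟩
  · exfalso
    have hps := pI_bounds hI hIs (show 1 ≤ s by omega) (show s ≤ r by omega)
    have hpt := pI_bounds hI hIs (show 1 ≤ t by omega) (show t ≤ r by omega)
    have hinj := ee_sub_inj hpt.1 hpt.2 hps.1 hps.2 (show 1 ≤ minI r I by omega)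
      (show minI r I ≤ r by omega) (show 1 ≤ q by omega) hqr (by omega) heq
    have := pI_eq_min hI hIs (show 1 ≤ t by omega) (show t ≤ r by omega) hinj.1
    omega
  · exact ⟨s, hs1, hsr, hγe⟩

/-- every element of `ν₀(c_I)` is of the form `e_x - e_y`. -/
lemma nu0_class (hI : I.Nonempty) (hIs : I ⊆ Finset.Icc 1 (r - 1)) (hr : 5 ≤ r)
    {β : Fin r → ℝ} (hβ : β ∈ nu0 r (cI r I)) :
    ∃ x y, 1 ≤ x ∧ x < y ∧ y ≤ r ∧ β = ee r x - ee r y := by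
  obtain ⟨⟨x, y, hx1, hxy, hyr, hcase⟩, γ, hγ, hcIγ⟩ := hβ
  rcases hcase with hβe | hβe
  · exact ⟨x, y, hx1, hxy, hyr, hβe⟩
  · exfalso
    -- total sum of `ee x + ee y` is 2, impossible for an image of a positive root
    have htot2 : phi r 0 (cI r I γ) = 2 := by
      rw [hcIγ, hβe, phi_add, tot_ee hx1 (by omega), tot_ee (by omega) hyr]; norm_num
    obtain ⟨s, t, hs1, hst, htr, hγe⟩ := hγ
    have hps := pI_bounds hI hIs (show 1 ≤ s by omega) (show s ≤ r by omega)
    have hmb := mem_bounds hIs (minI_mem hI hIs)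
    rcases hγe with hγe | hγe <;> by_cases ht : t = r
    · subst ht
      rw [hγe, cI_mr hs1 (by omega)] at htot2
      rw [phi_sub, phi_neg, tot_ee hps.1 hps.2, tot_ee (by omega) (by omega)] at htot2
      norm_num at htot2
    · have htr' : t < r := by omega
      have hpt := pI_bounds hI hIs (show 1 ≤ t by omega) (show t ≤ r by omega)
      rw [hγe, cI_mm hs1 hst htr'] at htot2
      rw [phi_sub, tot_ee hpt.1 hpt.2, tot_ee hps.1 hps.2] at htot2
      norm_num at htot2
    · subst ht
      rw [hγe, cI_pr hs1 (by omega)] at htot2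
      rw [phi_sub, tot_ee (by omega) (by omega), tot_ee hps.1 hps.2] at htot2
      norm_num at htot2
    · have htr' : t < r := by omega
      have hpt := pI_bounds hI hIs (show 1 ≤ t by omega) (show t ≤ r by omega)
      rw [hγe, cI_pm hs1 hst htr'] at htot2
      rw [phi_add, phi_neg, phi_neg, tot_ee hps.1 hps.2, tot_ee hpt.1 hpt.2] at htot2
      norm_num at htot2

/-- every element of `ν₀(c_I)` is in `A_I` or `B_I`. -/
lemma nu0_AB (hI : I.Nonempty) (hIs : I ⊆ Finset.Icc 1 (r - 1)) (hr : 5 ≤ r)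
    {α : Fin r → ℝ} (hα : α ∈ nu0 r (cI r I)) :
    (∃ a b, a ∈ I ∧ a < b ∧ b < nextI r I a ∧ α = ee r b - ee r (nextI r I a)) ∨
    (∃ q, minI r I < q ∧ q ≤ r ∧ α = ee r (minI r I) - ee r q) := by
  obtain ⟨x, y, hx1, hxy, hyr, hαe⟩ := nu0_class hI hIs hr hα
  obtain ⟨-, γ, hγ, hcIγ⟩ := hα
  rw [hαe] at hcIγ
  rcases preimage_cases hI hIs hr hγ hx1 (by omega) (by omega) hyr hcIγ with
    ⟨s, t, hs1, hst, htr, hγe, heq⟩ | ⟨s, hs1, hsr, hγe, heq⟩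
  · have hps := pI_bounds hI hIs (show 1 ≤ s by omega) (show s ≤ r by omega)
    have hpt := pI_bounds hI hIs (show 1 ≤ t by omega) (show t ≤ r by omega)
    have hinj := ee_sub_inj hpt.1 hpt.2 hps.1 hps.2 hx1 (by omega) (by omega) hyr
      (by omega) heq
    by_cases htI : t ∈ I
    · exfalso
      -- x = nextI t, and pI s < x is impossible for s < t
      have hxn : nextI r I t = x := by rw [← hinj.1, pI_mem htI]
      have htb := mem_bounds hIs htI
      have htn := lt_nextI (I := I) (show t < r by omega)
      by_cases hsI : s ∈ I
      · have h1 : nextI r I s ≤ t := nextI_le (show s < r by omega)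
          (Finset.mem_insert_of_mem htI) hst
        have h2 : pI r I s = nextI r I s := pI_mem hsI
        omega
      · have h2 : pI r I s = s := pI_fix hsI (by omega)
        omega
    · left
      have hxt : pI r I t = t := pI_fix htI (by omega)
      have hxet : x = t := by rw [← hinj.1, hxt]
      by_cases hsI : s ∈ I
      · have hy : nextI r I s = y := by rw [← hinj.2, pI_mem hsI]
        exact ⟨s, t, hsI, hst, by omega, by rw [hαe, hxet, hy]⟩
      · exfalso
        have h2 : pI r I s = s := pI_fix hsI (by omega)
        omega
  · right
    have hps := pI_bounds hI hIs (show 1 ≤ s by omega) (show s ≤ r by omega)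
    have hmb := mem_bounds hIs (minI_mem hI hIs)
    have hinj := ee_sub_inj (show 1 ≤ minI r I by omega) (show minI r I ≤ r by omega)
      hps.1 hps.2 hx1 (by omega) (by omega) hyr (by omega) heq
    exact ⟨y, by omega, hyr, by rw [hαe, hinj.1]⟩

end Main

/-- the arrows of `Γ_{c_I}` are exactly
`A(a,b) = e_b - e_{n_I(a)} → B(q) = e_{i₁} - e_q` with `b ≤ q`. -/
theorem stmt10 (r : ℕ) (hr : 5 ≤ r) (hodd : Odd r)
    (I : Finset ℕ) (hI : I.Nonempty) (hIs : I ⊆ Finset.Icc 1 (r - 1)) :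
    (∀ a b q, a ∈ I → a < b → b < nextI r I a → minI r I < q → q ≤ r →
      (Arrow r (cI r I) (ee r b - ee r (nextI r I a)) (ee r (minI r I) - ee r q)
        ↔ b ≤ q)) ∧
    (∀ α β, α ∈ nu0 r (cI r I) → β ∈ nu0 r (cI r I) → Arrow r (cI r I) α β →
      ∃ a b q, a ∈ I ∧ a < b ∧ b < nextI r I a ∧ minI r I < q ∧ q ≤ r ∧ b ≤ q ∧
        α = ee r b - ee r (nextI r I a) ∧ β = ee r (minI r I) - ee r q) := by
  have hmb := mem_bounds hIs (minI_mem hI hIs)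
  constructor
  · intro a b q ha hab hbn hq1 hqr
    have hba := mem_bounds hIs ha
    have har : a < r := by omega
    have hNr := nextI_le_r (I := I) har
    have haN := lt_nextI (I := I) har
    have hi1a : minI r I ≤ a := minI_le hI hIs ha
    have hbI : b ∉ insert r I := between_not_mem ha har hab hbn
    constructor
    · rintro ⟨γ, hγ, hcIγ, hle⟩
      have hγe := preimage_A hI hIs hr ha hab hbn hγ hcIγ
      rw [hγe] at hle
      exact (rootLE_forward (show 2 ≤ r by omega) (show 1 ≤ a by omega) hab
        (show b ≤ r by omega) (show 1 ≤ minI r I by omega) hq1 hqr hle).2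
    · intro hbq
      refine ⟨ee r a - ee r b, ⟨a, b, by omega, hab, by omega, Or.inl rfl⟩, ?_, ?_⟩
      · rw [cI_mm (show 1 ≤ a by omega) hab (show b < r by omega),
          pI_fix (fun hbI' => hbI (Finset.mem_insert_of_mem hbI')) (show b ≠ r by omega),
          pI_mem ha]
      · exact rootLE_construct (show 1 ≤ minI r I by omega) hi1a hab hbq hqr
  · intro α β hα hβ harr
    rcases nu0_AB hI hIs hr hα with ⟨a, b, ha, hab, hbn, hαe⟩ | ⟨q', hq1', hqr', hαe⟩
    · obtain ⟨γ, hγ, hcIγ, hle⟩ := harr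
      rw [hαe] at hcIγ
      have hγe := preimage_A hI hIs hr ha hab hbn hγ hcIγ
      rw [hγe] at hle
      have hba := mem_bounds hIs ha
      have har : a < r := by omega
      have hNr := nextI_le_r (I := I) har
      rcases nu0_AB hI hIs hr hβ with ⟨c, d, hc, hcd, hdn, hβe⟩ | ⟨q, hq1, hqr, hβe⟩
      · exfalso
        have hcb := mem_bounds hIs hc
        have hcr : c < r := by omega
        have hNcr := nextI_le_r (I := I) hcr
        rw [hβe] at hle
        have fwd := rootLE_forward (show 2 ≤ r by omega) (show 1 ≤ a by omega) hab
          (show b ≤ r by omega) (show 1 ≤ d by omega) hdn hNcr hle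
        have h1 : nextI r I c ≤ a := nextI_le hcr (Finset.mem_insert_of_mem ha) (by omega)
        omega
      · rw [hβe] at hle
        have fwd := rootLE_forward (show 2 ≤ r by omega) (show 1 ≤ a by omega) hab
          (show b ≤ r by omega) (show 1 ≤ minI r I by omega) hq1 hqr hle
        exact ⟨a, b, q, ha, hab, hbn, hq1, hqr, fwd.2, hαe, hβe⟩
    · exfalso
      obtain ⟨γ, hγ, hcIγ, hle⟩ := harr
      rw [hαe] at hcIγ
      obtain ⟨s, hs1, hsr, hγe⟩ := preimage_B hI hIs hr hq1' hqr' hγ hcIγ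
      rw [hγe] at hle
      obtain ⟨x, y, hx1, hxy, hyr, hβe⟩ := nu0_class hI hIs hr hβ
      rw [hβe] at hle
      exact rootLE_plus_forward (show 2 ≤ r by omega) hs1 (by omega) hx1 (by omega)
        (by omega) hyr hle

end
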